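/- arXiv:2503.09144 — 6 statements merged into one kernel-verified Lean document; each statement's English description precedes it below -/
import Mathlib

section
/- For any positive reals a, b, c and T_max, the function E(T) = a/(T_max − T)² + c·T·(2^{b/T} − 1) is strictly convex on the open interval (0, T_max). -/
/-!
`a / (T_max - T)²` is a positive multiple of the strictly convex function `x ↦ x⁻²` composed
with the reflection `T ↦ T_max - T`. Writing `2^{b/T} = exp (k/T)` with `k = b log 2`, the
second term is `c` times `T (exp (k/T) - 1)`, whose second derivative `k² exp (k/T) / T³` is
nonnegative for `T > 0`. A strictly convex function plus a convex one is strictly convex.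
-/

open Real Set

section StrictConvexOn

variable {E : Type*} [AddCommGroup E] [Module ℝ E] {s : Set E} {f : E → ℝ}

theorem StrictConvexOn.const_mul {c : ℝ} (hc : 0 < c) (hf : StrictConvexOn ℝ s f) :
    StrictConvexOn ℝ s fun x => c * f x :=
  ⟨hf.1, fun x hx y hy hxy a b ha hb hab =>
    calc c * f (a • x + b • y) < c * (a • f x + b • f y) :=
          mul_lt_mul_of_pos_left (hf.2 hx hy hxy ha hb hab) hc
      _ = a • (c * f x) + b • (c * f y) := by simp only [smul_eq_mul]; ring⟩

theorem StrictConvexOn.comp_const_sub (hf : StrictConvexOn ℝ s f) (c : E) :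
    StrictConvexOn ℝ ((c - ·) ⁻¹' s) fun x => f (c - x) := by
  have hcombo : ∀ x y : E, ∀ a b : ℝ, a + b = 1 →
      c - (a • x + b • y) = a • (c - x) + b • (c - y) := by
    intro x y a b hab
    rw [smul_sub, smul_sub]
    nth_rewrite 1 [← Convex.combo_self hab c]
    abel
  refine ⟨fun x hx y hy a b ha hb hab => ?_, fun x hx y hy hxy a b ha hb hab => ?_⟩
  · simpa only [mem_preimage, hcombo x y a b hab] using hf.1 hx hy ha hb hab
  · simpa only [hcombo x y a b hab] using
      hf.2 hx hy (fun h => hxy (sub_right_injective h)) ha hb hab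

end StrictConvexOn

theorem strictConvexOn_div_sub_sq {a : ℝ} (ha : 0 < a) (c : ℝ) :
    StrictConvexOn ℝ (Iio c) fun x => a / (c - x) ^ 2 := by
  have hzpow :=
    ((strictConvexOn_zpow (m := -2) (by decide) (by decide)).comp_const_sub c).const_mul ha
  have hset : (c - ·) ⁻¹' Ioi (0 : ℝ) = Iio c := by ext x; simp
  rw [hset] at hzpow
  refine hzpow.congr fun x _ => ?_
  simp only [zpow_neg, div_eq_mul_inv]
  norm_cast

theorem convexOn_mul_exp_div_sub_one (k : ℝ) :
    ConvexOn ℝ (Ioi 0) fun x => x * (exp (k / x) - 1) := by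
  have hdiv : ∀ x ≠ (0 : ℝ), HasDerivAt (fun y => k / y) (-k / x ^ 2) x := fun x hx => by
    simpa [div_eq_mul_inv, neg_div] using (hasDerivAt_inv hx).const_mul k
  have hf' : ∀ x ∈ Ioi (0 : ℝ), HasDerivAt (fun x => x * (exp (k / x) - 1))
      (exp (k / x) * (1 - k / x) - 1) x := fun x hx => by
    have hx0 : x ≠ 0 := hx.out.ne'
    refine ((hasDerivAt_id' x).mul ((hdiv x hx0).exp.sub_const 1)).congr_deriv ?_
    field_simp
    ring
  have hf'' : ∀ x ∈ Ioi (0 : ℝ), HasDerivAt (fun x => exp (k / x) * (1 - k / x) - 1)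
      (exp (k / x) * (k ^ 2 / x ^ 3)) x := fun x hx => by
    have hx0 : x ≠ 0 := hx.out.ne'
    have hk := hdiv x hx0
    refine ((hk.exp.mul (hk.const_sub 1)).sub_const 1).congr_deriv ?_
    field_simp
    ring
  refine convexOn_of_hasDerivWithinAt2_nonneg (convex_Ioi 0)
    (fun x hx => (hf' x hx).continuousAt.continuousWithinAt)
    (fun x hx => (hf' x (interior_subset hx)).hasDerivWithinAt)
    (fun x hx => (hf'' x (interior_subset hx)).hasDerivWithinAt) fun x hx => ?_
  have hx : 0 < x := interior_subset hx
  positivity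

theorem stmt_5_general (a b c Tmax : ℝ) (ha : 0 < a) (hc : 0 < c) :
    StrictConvexOn ℝ (Set.Ioo (0 : ℝ) Tmax)
      (fun T : ℝ => a / (Tmax - T) ^ 2 + c * T * ((2 : ℝ) ^ (b / T) - 1)) := by
  have hcomputation :=
    (strictConvexOn_div_sub_sq ha Tmax).subset Ioo_subset_Iio_self (convex_Ioo 0 Tmax)
  have hcommunication := ((convexOn_mul_exp_div_sub_one (log 2 * b)).smul hc.le).subset
    Ioo_subset_Ioi_self (convex_Ioo 0 Tmax)
  refine (hcomputation.add_convexOn hcommunication).congr fun T _ => ?_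
  simp only [Pi.add_apply, smul_eq_mul, rpow_def_of_pos two_pos, mul_div_assoc]
  ring

/-- The per-round UAV energy `E(T) = a/(T_max − T)² + c·T·(2^{b/T} − 1)` is strictly
convex in the transmission time `T` on `(0, T_max)` (equation (44) of the paper). -/
theorem stmt_5 (a b c Tmax : ℝ) (ha : 0 < a) (hb : 0 < b) (hc : 0 < c)
    (hT : 0 < Tmax) :
    StrictConvexOn ℝ (Set.Ioo (0 : ℝ) Tmax)
      (fun T : ℝ => a / (Tmax - T) ^ 2 + c * T * ((2 : ℝ) ^ (b / T) - 1)) :=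
  stmt_5_general a b c Tmax ha hc
end

section
/- For any positive reals a, b, c and T_max, the function E(T) = a/(T_max − T)² + c·T·(2^{b/T} − 1) attains a unique global minimum on (0, T_max): there exists a unique T* ∈ (0, T_max) such that E(T*) < E(T) for every T ∈ (0, T_max) with T ≠ T*; moreover the derivative of E vanishes at T*. -/
/-!
`E` is strictly convex on `(0, T_max)`, its second derivative being
`6a/(T_max − T)⁴ + c·2^{b/T}·(b log 2)²/T³ > 0`. It tends to `+∞` at both ends of the interval:
at `T_max` because of `a/(T_max − T)²`, and at `0` because `e^x − 1 ≥ x²/2` gives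
`T·(2^{b/T} − 1) ≥ (b log 2)²/(2T)`. Hence `E` attains its minimum on the open interval, at an
interior point where `E'` vanishes, and strict convexity makes that minimizer strict and unique.
-/

open Filter Set Topology Real

theorem ContinuousOn.exists_isMinOn_Ioo_of_tendsto_atTop {α β : Type*} [LinearOrder α]
    [TopologicalSpace α] [OrderTopology α] [CompactIccSpace α] [DenselyOrdered α]
    [NoMinOrder α] [NoMaxOrder α] [LinearOrder β] [TopologicalSpace β] [ClosedIicTopology β]
    [NoMaxOrder β] {f : α → β} {a b : α} (hab : a < b) (hf : ContinuousOn f (Ioo a b))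
    (ha : Tendsto f (𝓝[>] a) atTop) (hb : Tendsto f (𝓝[<] b) atTop) :
    ∃ x ∈ Ioo a b, IsMinOn f (Ioo a b) x := by
  obtain ⟨x₀, hx₀⟩ := nonempty_Ioo.2 hab
  obtain ⟨u, hau, hu⟩ := mem_nhdsGT_iff_exists_Ioc_subset.1 (ha.eventually_gt_atTop (f x₀))
  obtain ⟨v, hvb, hv⟩ := mem_nhdsLT_iff_exists_Ico_subset.1 (hb.eventually_gt_atTop (f x₀))
  have hx₀mem : x₀ ∈ Icc (min u x₀) (max v x₀) := ⟨min_le_right _ _, le_max_right _ _⟩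
  have hsub : Icc (min u x₀) (max v x₀) ⊆ Ioo a b :=
    Icc_subset_Ioo (lt_min hau hx₀.1) (max_lt hvb hx₀.2)
  obtain ⟨x, hx, hmin⟩ := isCompact_Icc.exists_isMinOn ⟨x₀, hx₀mem⟩ (hf.mono hsub)
  refine ⟨x, hsub hx, fun y hy => ?_⟩
  rcases le_or_gt y (min u x₀) with hyu | hyu
  · exact (hmin hx₀mem).trans (hu ⟨hy.1, hyu.trans (min_le_left _ _)⟩).le
  rcases le_or_gt (max v x₀) y with hyv | hyv
  · exact (hmin hx₀mem).trans (hv ⟨(le_max_left _ _).trans hyv, hy.2⟩).le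
  · exact hmin ⟨hyu.le, hyv.le⟩

theorem StrictConvexOn.lt_of_isMinOn {𝕜 E β : Type*} [Field 𝕜] [LinearOrder 𝕜]
    [IsStrictOrderedRing 𝕜] [AddCommMonoid β] [PartialOrder β] [IsOrderedAddMonoid β]
    [AddCommMonoid E] [SMul 𝕜 E] [Module 𝕜 β] [PosSMulMono 𝕜 β] {s : Set E} {f : E → β} {x y : E}
    (hf : StrictConvexOn 𝕜 s f) (hfx : IsMinOn f s x) (hx : x ∈ s) (hy : y ∈ s) (hyx : y ≠ x) :
    f x < f y :=
  (hfx hy).lt_of_ne fun hxy => hyx <| hf.eq_of_isMinOn (fun _ hz => hxy ▸ hfx hz) hfx hy hx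

theorem strictConvexOn_of_hasDerivAt_of_hasDerivAt_pos {D : Set ℝ} (hD : Convex ℝ D)
    (hD' : IsOpen D) {f f' f'' : ℝ → ℝ} (hf : ∀ x ∈ D, HasDerivAt f (f' x) x)
    (hf' : ∀ x ∈ D, HasDerivAt f' (f'' x) x) (hf''_pos : ∀ x ∈ D, 0 < f'' x) :
    StrictConvexOn ℝ D f := by
  refine strictConvexOn_of_deriv2_pos hD (fun x hx => (hf x hx).continuousAt.continuousWithinAt)
    fun x hx => ?_
  rw [hD'.interior_eq] at hx
  have hderiv : deriv f =ᶠ[𝓝 x] f' :=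
    eventually_of_mem (hD'.mem_nhds hx) fun y hy => (hf y hy).deriv
  rw [Function.iterate_succ_apply', Function.iterate_one, hderiv.deriv_eq, (hf' x hx).deriv]
  exact hf''_pos x hx

theorem le_mul_rpow_div_sub_one {x b T : ℝ} (hx : 1 ≤ x) (hb : 0 ≤ b) (hT : 0 < T) :
    (b * log x) ^ 2 / (2 * T) ≤ T * (x ^ (b / T) - 1) := by
  have hexponent : 0 ≤ log x * (b / T) := mul_nonneg (log_nonneg hx) (div_nonneg hb hT.le)
  have hexp := quadratic_le_exp_of_nonneg hexponent
  rw [← rpow_def_of_pos (zero_lt_one.trans_le hx)] at hexp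
  calc (b * log x) ^ 2 / (2 * T) = T * ((log x * (b / T)) ^ 2 / 2) := by field_simp
    _ ≤ T * (x ^ (b / T) - 1) := by gcongr; linarith

noncomputable def energy (a b c Tmax T : ℝ) : ℝ :=
  a / (Tmax - T) ^ 2 + c * T * ((2 : ℝ) ^ (b / T) - 1)

noncomputable def energyDeriv (a b c Tmax T : ℝ) : ℝ :=
  2 * a / (Tmax - T) ^ 3 + c * ((2 : ℝ) ^ (b / T) * (1 - b * log 2 / T) - 1)

section Energy

variable {a b c Tmax T : ℝ}

theorem hasDerivAt_energy (hT : T ≠ 0) (hTmax : T ≠ Tmax) :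
    HasDerivAt (energy a b c Tmax) (energyDeriv a b c Tmax T) T := by
  have hgap : Tmax - T ≠ 0 := sub_ne_zero.2 hTmax.symm
  have hfirst := (hasDerivAt_const T a).div (((hasDerivAt_id T).const_sub Tmax).pow 2)
    (pow_ne_zero 2 hgap)
  have hpow := ((hasDerivAt_const T b).div (hasDerivAt_id T) hT).const_rpow two_pos
  have hsecond := ((hasDerivAt_id T).const_mul c).mul (hpow.sub_const 1)
  refine (hfirst.add hsecond).congr_deriv ?_
  simp only [energyDeriv, Pi.div_apply, Pi.pow_apply, id]
  field_simp
  ring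

theorem hasDerivAt_energyDeriv (hT : T ≠ 0) (hTmax : T ≠ Tmax) :
    HasDerivAt (energyDeriv a b c Tmax)
      (6 * a / (Tmax - T) ^ 4 + c * ((2 : ℝ) ^ (b / T) * (b * log 2) ^ 2 / T ^ 3)) T := by
  have hgap : Tmax - T ≠ 0 := sub_ne_zero.2 hTmax.symm
  have hfirst := (hasDerivAt_const T (2 * a)).div (((hasDerivAt_id T).const_sub Tmax).pow 3)
    (pow_ne_zero 3 hgap)
  have hpow := ((hasDerivAt_const T b).div (hasDerivAt_id T) hT).const_rpow two_pos
  have hfactor := ((hasDerivAt_const T (b * log 2)).div (hasDerivAt_id T) hT).const_sub 1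
  have hsecond := ((hpow.mul hfactor).sub_const 1).const_mul c
  refine (hfirst.add hsecond).congr_deriv ?_
  simp only [Pi.div_apply, Pi.pow_apply, id]
  field_simp
  ring

theorem continuousOn_energy : ContinuousOn (energy a b c Tmax) (Ioo 0 Tmax) := fun _ hT =>
  (hasDerivAt_energy hT.1.ne' hT.2.ne).continuousAt.continuousWithinAt

theorem strictConvexOn_energy (ha : 0 < a) (hc : 0 ≤ c) :
    StrictConvexOn ℝ (Ioo 0 Tmax) (energy a b c Tmax) :=
  strictConvexOn_of_hasDerivAt_of_hasDerivAt_pos (convex_Ioo 0 Tmax) isOpen_Ioo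
    (fun _ hT => hasDerivAt_energy hT.1.ne' hT.2.ne)
    (fun _ hT => hasDerivAt_energyDeriv hT.1.ne' hT.2.ne) fun T hT => by
      have hT₀ := hT.1
      have hgap := sub_pos.2 hT.2
      positivity

theorem tendsto_energy_nhdsGT_zero (ha : 0 ≤ a) (hb : 0 < b) (hc : 0 < c) :
    Tendsto (energy a b c Tmax) (𝓝[>] 0) atTop := by
  have hK : 0 < c * (b * log 2) ^ 2 / 2 := by have := log_pos one_lt_two; positivity
  refine tendsto_atTop_mono' _ ?_ (tendsto_inv_nhdsGT_zero.const_mul_atTop hK)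
  filter_upwards [self_mem_nhdsWithin] with T (hT : 0 < T)
  have hsecond := le_mul_rpow_div_sub_one one_le_two hb.le hT
  calc c * (b * log 2) ^ 2 / 2 * T⁻¹ = c * ((b * log 2) ^ 2 / (2 * T)) := by field_simp
    _ ≤ energy a b c Tmax T := by
      rw [energy, mul_assoc]
      have hfirst : 0 ≤ a / (Tmax - T) ^ 2 := by positivity
      nlinarith

theorem tendsto_energy_nhdsLT (ha : 0 < a) (hb : 0 ≤ b) (hc : 0 ≤ c) (hTmax : 0 < Tmax) :
    Tendsto (energy a b c Tmax) (𝓝[<] Tmax) atTop := by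
  have hgap : Tendsto (fun T => (Tmax - T) ^ 2) (𝓝[<] Tmax) (𝓝[>] 0) := by
    refine tendsto_nhdsWithin_iff.2 ⟨?_, ?_⟩
    · have hcont : Continuous fun T : ℝ => (Tmax - T) ^ 2 := by fun_prop
      exact tendsto_nhdsWithin_of_tendsto_nhds (hcont.tendsto' _ _ (by simp))
    · filter_upwards [self_mem_nhdsWithin] with T (hT : T < Tmax)
      exact pow_pos (sub_pos.2 hT) 2
  refine tendsto_atTop_mono' _ ?_ (hgap.inv_tendsto_nhdsGT_zero.const_mul_atTop ha)
  filter_upwards [Ioo_mem_nhdsLT hTmax] with T hT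
  have hsecond : 0 ≤ c * (T * ((2 : ℝ) ^ (b / T) - 1)) :=
    mul_nonneg hc ((div_nonneg (sq_nonneg _) (by linarith [hT.1])).trans
      (le_mul_rpow_div_sub_one one_le_two hb hT.1))
  simp only [energy, Pi.inv_apply, ← div_eq_mul_inv]
  linarith

end Energy

/-- Core of Theorem 2: the per-round energy `E(T) = a/(T_max − T)² + c·T·(2^{b/T} − 1)`
attains a unique global minimum on `(0, T_max)`, at a point where its derivative
vanishes. -/
theorem stmt_6 (a b c Tmax : ℝ) (ha : 0 < a) (hb : 0 < b) (hc : 0 < c)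
    (hT : 0 < Tmax) :
    ∃! Tstar : ℝ, Tstar ∈ Set.Ioo (0 : ℝ) Tmax ∧
      (∀ T ∈ Set.Ioo (0 : ℝ) Tmax, T ≠ Tstar →
        a / (Tmax - Tstar) ^ 2 + c * Tstar * ((2 : ℝ) ^ (b / Tstar) - 1) <
          a / (Tmax - T) ^ 2 + c * T * ((2 : ℝ) ^ (b / T) - 1)) ∧
      deriv (fun T : ℝ => a / (Tmax - T) ^ 2 + c * T * ((2 : ℝ) ^ (b / T) - 1))
        Tstar = 0 := by
  obtain ⟨Tstar, hTstar, hmin⟩ := continuousOn_energy.exists_isMinOn_Ioo_of_tendsto_atTop hT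
    (tendsto_energy_nhdsGT_zero ha.le hb hc) (tendsto_energy_nhdsLT ha hb.le hc.le hT)
  have hstrict : ∀ T ∈ Ioo 0 Tmax, T ≠ Tstar → energy a b c Tmax Tstar < energy a b c Tmax T :=
    fun _ hTmem hne => (strictConvexOn_energy ha hc.le).lt_of_isMinOn hmin hTstar hTmem hne
  refine ⟨Tstar, ⟨hTstar, hstrict, ?_⟩, fun T ⟨hTmem, hTmin, _⟩ => ?_⟩
  · exact (hmin.isLocalMin (isOpen_Ioo.mem_nhds hTstar)).deriv_eq_zero
  · by_contra hne
    exact (hstrict T hTmem hne).asymm (hTmin Tstar hTstar (Ne.symm hne))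
end

section
/- Let H be a real inner product space, N a positive integer, and ε ≥ 0. For n = 1,…,N let g_n ∈ H with ‖g_n‖ ≤ ε, let D_n > 0, and let β_n ∈ {0,1} with D_β := Σ_{n=1}^N β_n·D_n > 0. Write D = Σ_{n=1}^N D_n. Then ‖(1/D)·Σ_{n=1}^N D_n·g_n − (1/D_β)·Σ_{n=1}^N β_n·D_n·g_n‖² ≤ 4·(1 − D_β/D)²·ε². -/
/-- Inequality (66) in Appendix B (the bound on the term A₂): the squared distance
between the full data-weighted average of bounded gradients and the
partial-participation weighted average is at most `4(1 − D_β/D)²ε²`. -/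
theorem stmt_10
    {H : Type*} [NormedAddCommGroup H] [InnerProductSpace ℝ H]
    (N : ℕ) (hN : 0 < N) (ε : ℝ) (hε : 0 ≤ ε)
    (g : Fin N → H) (hg : ∀ n, ‖g n‖ ≤ ε)
    (D : Fin N → ℝ) (hD : ∀ n, 0 < D n)
    (β : Fin N → ℝ) (hβ : ∀ n, β n = 0 ∨ β n = 1)
    (hDβ : 0 < ∑ n, β n * D n) :
    ‖(∑ n, (D n / ∑ k, D k) • g n) - ∑ n, (β n * D n / ∑ k, β k * D k) • g n‖ ^ 2 ≤
      4 * (1 - (∑ n, β n * D n) / ∑ n, D n) ^ 2 * ε ^ 2 := by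
  set S := ∑ k, D k with hS
  set Sβ := ∑ k, β k * D k with hSβ
  have hSpos : 0 < S := Finset.sum_pos (fun n _ => hD n) ⟨⟨0, hN⟩, Finset.mem_univ _⟩
  have hle : Sβ ≤ S := by
    apply Finset.sum_le_sum
    intro n _
    rcases hβ n with h | h
    · simp [h]; exact (hD n).le
    · simp [h]
  have hc : 0 ≤ 1 - Sβ / S := by
    have := div_le_one_of_le₀ hle hSpos.le
    linarith
  have key : ‖(∑ n, (D n / S) • g n) - ∑ n, (β n * D n / Sβ) • g n‖ ≤
      2 * (1 - Sβ / S) * ε := by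
    rw [← Finset.sum_sub_distrib]
    calc ‖∑ n, ((D n / S) • g n - (β n * D n / Sβ) • g n)‖
        ≤ ∑ n, ‖(D n / S) • g n - (β n * D n / Sβ) • g n‖ := norm_sum_le _ _
      _ = ∑ n, ‖(D n / S - β n * D n / Sβ) • g n‖ := by simp [sub_smul]
      _ ≤ ∑ n, |D n / S - β n * D n / Sβ| * ε := by
          apply Finset.sum_le_sum
          intro n _
          rw [norm_smul, Real.norm_eq_abs]
          exact mul_le_mul_of_nonneg_left (hg n) (abs_nonneg _)
      _ = (∑ n, |D n / S - β n * D n / Sβ|) * ε := by rw [Finset.sum_mul]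
      _ ≤ 2 * (1 - Sβ / S) * ε := by
          apply mul_le_mul_of_nonneg_right _ hε
          have hsum : ∑ n, |D n / S - β n * D n / Sβ|
              = ∑ n, (β n * D n / Sβ - β n * D n / S + (1 - β n) * D n / S) := by
            apply Finset.sum_congr rfl
            intro n _
            rcases hβ n with h | h
            · rw [h]
              simp only [zero_mul, zero_div, sub_zero, one_mul]
              rw [abs_of_nonneg (div_nonneg (hD n).le hSpos.le)]
              ring
            · rw [h]
              simp only [one_mul, sub_self, zero_mul, zero_div, add_zero]
              rw [abs_of_nonpos]
              · ring
              · have h1 : D n / S ≤ D n / Sβ :=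
                  div_le_div_of_nonneg_left (hD n).le hDβ hle
                linarith
          rw [hsum]
          have e1 : ∑ n, (β n * D n / Sβ - β n * D n / S + (1 - β n) * D n / S)
              = Sβ / Sβ - Sβ / S + (S - Sβ) / S := by
            rw [hSβ, hS]
            rw [Finset.sum_add_distrib, Finset.sum_sub_distrib, ← Finset.sum_div,
              ← Finset.sum_div, ← Finset.sum_div, ← Finset.sum_sub_distrib]
            congr 2
            apply Finset.sum_congr rfl
            intro n _
            ring
          rw [e1, div_self hDβ.ne', sub_div, div_self hSpos.ne']
          ring_nf
          linarith
  calc ‖(∑ n, (D n / S) • g n) - ∑ n, (β n * D n / Sβ) • g n‖ ^ 2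
      ≤ (2 * (1 - Sβ / S) * ε) ^ 2 := by
        apply pow_le_pow_left₀ (norm_nonneg _) key
    _ = 4 * (1 - Sβ / S) ^ 2 * ε ^ 2 := by ring
end

section
/- Let H be a real inner product space and ε, δ ≥ 0. Let M be a finite set (of tasks), m ∈ S ⊆ M, and let there be N UAVs with data sizes D_n > 0 and association indicators β_{i,n} ∈ {0,1} for i ∈ M, n = 1,…,N, satisfying Σ_{i∈M} β_{i,n} = 1 for every n. For every i ∈ M and n let G_{i,n} ∈ H with ‖G_{i,n}‖ ≤ ε, and suppose that for every i ∈ S and n there exists Ĝ_{i,n} ∈ H with ‖Ĝ_{i,n}‖ ≤ ε and ‖Ĝ_{i,n} − G_{m,n}‖ ≤ δ. Let D = Σ_n D_n, D_i = Σ_n β_{i,n}·D_n for i ∈ M, and D_S = Σ_{i∈S} D_i, and assume D_S > 0. Then ‖(1/D_S)·Σ_{i∈S} Σ_{n=1}^N β_{i,n}·D_n·G_{i,n} − (1/D)·Σ_{n=1}^N D_n·G_{m,n}‖ ≤ (1 − D_m/D_S)·(δ + 2ε) + 2·(1 − D_S/D)·ε. -/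
/-- The aggregation-error bound A₁ (inequality (65)) in Appendix B, in norm form:
the deviation between the knowledge-sharing aggregate used to update task `m`'s
feature extractor and the ideal full average of task `m`'s gradients is bounded by
`(1 − D_m/D_S)(δ + 2ε) + 2(1 − D_S/D)ε`. -/
theorem stmt_11
    {H : Type*} [NormedAddCommGroup H] [InnerProductSpace ℝ H]
    {ι : Type*} [Fintype ι] [DecidableEq ι]
    (ε δ : ℝ) (hε : 0 ≤ ε) (hδ : 0 ≤ δ)
    (S : Finset ι) (m : ι) (hm : m ∈ S)
    (N : ℕ) (hN : 0 < N)
    (D : Fin N → ℝ) (hD : ∀ n, 0 < D n)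
    (β : ι → Fin N → ℝ) (hβ01 : ∀ i n, β i n = 0 ∨ β i n = 1)
    (hβ1 : ∀ n, ∑ i, β i n = 1)
    (G : ι → Fin N → H) (hG : ∀ i n, ‖G i n‖ ≤ ε)
    (Ghat : ι → Fin N → H)
    (hGhat : ∀ i ∈ S, ∀ n, ‖Ghat i n‖ ≤ ε)
    (hGhatδ : ∀ i ∈ S, ∀ n, ‖Ghat i n - G m n‖ ≤ δ)
    (hDS : 0 < ∑ i ∈ S, ∑ n, β i n * D n) :
    ‖(∑ i ∈ S, ∑ n, ((β i n * D n) / ∑ j ∈ S, ∑ k, β j k * D k) • G i n) -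
        ∑ n, (D n / ∑ k, D k) • G m n‖ ≤
      (1 - (∑ n, β m n * D n) / ∑ i ∈ S, ∑ n, β i n * D n) * (δ + 2 * ε)
        + 2 * (1 - (∑ i ∈ S, ∑ n, β i n * D n) / ∑ n, D n) * ε := by
  set DS := ∑ i ∈ S, ∑ n, β i n * D n with hDSdef
  set Dt := ∑ n, D n with hDtdef
  have hβnn : ∀ i n, 0 ≤ β i n := by
    intro i n; rcases hβ01 i n with h | h <;> simp [h]
  set c : Fin N → ℝ := fun n => ∑ i ∈ S, β i n with hcdef
  have hc0 : ∀ n, 0 ≤ c n := fun n => Finset.sum_nonneg fun i _ => hβnn i n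
  have hc1 : ∀ n, c n ≤ 1 := by
    intro n
    calc c n ≤ ∑ i, β i n :=
          Finset.sum_le_sum_of_subset_of_nonneg (Finset.subset_univ S)
            (fun i _ _ => hβnn i n)
      _ = 1 := hβ1 n
  have hDt : 0 < Dt := Finset.sum_pos (fun n _ => hD n) ⟨⟨0, hN⟩, Finset.mem_univ _⟩
  have hDSc : DS = ∑ n, c n * D n := by
    rw [hDSdef, Finset.sum_comm]
    exact Finset.sum_congr rfl fun n _ => (Finset.sum_mul _ _ _).symm
  have hDSle : DS ≤ Dt := by
    rw [hDSc, hDtdef]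
    refine Finset.sum_le_sum fun n _ => ?_
    nlinarith [hc1 n, (hD n).le]
  set Dm := ∑ n, β m n * D n with hDmdef
  have hDm_nn : 0 ≤ Dm := Finset.sum_nonneg fun n _ => mul_nonneg (hβnn m n) (hD n).le
  have hDm_le : Dm ≤ DS := by
    rw [hDSdef]
    exact Finset.single_le_sum
      (fun i _ => Finset.sum_nonneg fun n _ => mul_nonneg (hβnn i n) (hD n).le) hm
  set A := ∑ i ∈ S, ∑ n, ((β i n * D n) / DS) • G i n with hA
  set B := ∑ n, (D n / Dt) • G m n with hB
  set X := ∑ i ∈ S, ∑ n, ((β i n * D n) / DS) • (G i n - G m n) with hXdef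
  set Y := ∑ n, (c n * D n / DS - D n / Dt) • G m n with hYdef
  have hswap : ∑ i ∈ S, ∑ n, ((β i n * D n) / DS) • G m n
      = ∑ n, ((c n * D n) / DS) • G m n := by
    rw [Finset.sum_comm]
    refine Finset.sum_congr rfl fun n _ => ?_
    rw [← Finset.sum_smul, ← Finset.sum_div, ← Finset.sum_mul]
  have key : A - B = X + Y := by
    have h1 : X = A - ∑ n, ((c n * D n) / DS) • G m n := by
      rw [hXdef, ← hswap, hA]
      simp only [smul_sub, Finset.sum_sub_distrib]
    have h2 : Y = (∑ n, ((c n * D n) / DS) • G m n) - B := by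
      rw [hYdef, hB]
      simp only [sub_smul, Finset.sum_sub_distrib]
    rw [h1, h2]; abel
  have hwnn : ∀ i n, 0 ≤ β i n * D n / DS :=
    fun i n => div_nonneg (mul_nonneg (hβnn i n) (hD n).le) hDS.le
  -- bound on X
  have hGdiff : ∀ i ∈ S, ∀ n, ‖G i n - G m n‖ ≤ δ + 2 * ε := by
    intro i hi n
    calc ‖G i n - G m n‖ = ‖(G i n - Ghat i n) + (Ghat i n - G m n)‖ := by abel_nf
      _ ≤ ‖G i n - Ghat i n‖ + ‖Ghat i n - G m n‖ := norm_add_le _ _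
      _ ≤ (‖G i n‖ + ‖Ghat i n‖) + δ := by
          gcongr
          · exact norm_sub_le _ _
          · exact hGhatδ i hi n
      _ ≤ (ε + ε) + δ := by gcongr; exacts [hG i n, hGhat i hi n]
      _ = δ + 2 * ε := by ring
  have hXbound : ‖X‖ ≤ (1 - Dm / DS) * (δ + 2 * ε) := by
    have hXer : X = ∑ i ∈ S.erase m, ∑ n, ((β i n * D n) / DS) • (G i n - G m n) := by
      rw [hXdef, ← Finset.add_sum_erase _ _ hm]
      simp
    rw [hXer]
    calc ‖∑ i ∈ S.erase m, ∑ n, ((β i n * D n) / DS) • (G i n - G m n)‖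
        ≤ ∑ i ∈ S.erase m, ∑ n, ‖((β i n * D n) / DS) • (G i n - G m n)‖ := by
          refine (norm_sum_le _ _).trans (Finset.sum_le_sum fun i _ => norm_sum_le _ _)
      _ ≤ ∑ i ∈ S.erase m, ∑ n, (β i n * D n / DS) * (δ + 2 * ε) := by
          refine Finset.sum_le_sum fun i hi => Finset.sum_le_sum fun n _ => ?_
          rw [norm_smul, Real.norm_eq_abs, abs_of_nonneg (hwnn i n)]
          exact mul_le_mul_of_nonneg_left (hGdiff i (Finset.mem_of_mem_erase hi) n)
            (hwnn i n)
      _ = (∑ i ∈ S.erase m, ∑ n, β i n * D n) / DS * (δ + 2 * ε) := by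
          rw [Finset.sum_div, Finset.sum_mul]
          refine Finset.sum_congr rfl fun i _ => ?_
          rw [Finset.sum_div, Finset.sum_mul]
      _ = (DS - Dm) / DS * (δ + 2 * ε) := by
          rw [Finset.sum_erase_eq_sub hm]
      _ = (1 - Dm / DS) * (δ + 2 * ε) := by
          rw [sub_div, div_self hDS.ne']
  -- bound on Y
  have habs : ∀ n, |c n * D n / DS - D n / Dt| ≤
      (c n * D n / DS - c n * D n / Dt) + (D n - c n * D n) / Dt := by
    intro n
    have hP : 0 ≤ c n * D n / DS - c n * D n / Dt := by
      have : c n * D n / Dt ≤ c n * D n / DS := by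
        gcongr
        exact mul_nonneg (hc0 n) (hD n).le
      linarith
    have hQ : 0 ≤ (D n - c n * D n) / Dt := by
      apply div_nonneg _ hDt.le
      nlinarith [hc1 n, (hD n).le]
    have hid : c n * D n / DS - D n / Dt
        = (c n * D n / DS - c n * D n / Dt) - (D n - c n * D n) / Dt := by
      ring
    rw [hid, abs_le]
    constructor <;> linarith
  have hYbound : ‖Y‖ ≤ 2 * (1 - DS / Dt) * ε := by
    calc ‖Y‖ ≤ ∑ n, ‖(c n * D n / DS - D n / Dt) • G m n‖ := norm_sum_le _ _
      _ ≤ ∑ n, ((c n * D n / DS - c n * D n / Dt) + (D n - c n * D n) / Dt) * ε := by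
          refine Finset.sum_le_sum fun n _ => ?_
          rw [norm_smul, Real.norm_eq_abs]
          exact mul_le_mul (habs n) (hG m n) (norm_nonneg _)
            (le_trans (abs_nonneg _) (habs n))
      _ = ((∑ n, (c n * D n / DS - c n * D n / Dt)) + ∑ n, (D n - c n * D n) / Dt) * ε := by
          rw [← Finset.sum_mul, Finset.sum_add_distrib]
      _ = 2 * (1 - DS / Dt) * ε := by
          congr 1
          rw [Finset.sum_sub_distrib, ← Finset.sum_div, ← Finset.sum_div, ← hDSc,
            ← Finset.sum_div, Finset.sum_sub_distrib, ← hDSc, ← hDtdef,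
            div_self hDS.ne', sub_div, div_self hDt.ne']
          ring
  calc ‖A - B‖ = ‖X + Y‖ := by rw [key]
    _ ≤ ‖X‖ + ‖Y‖ := norm_add_le _ _
    _ ≤ (1 - Dm / DS) * (δ + 2 * ε) + 2 * (1 - DS / Dt) * ε := add_le_add hXbound hYbound
end

section
/- Let T and N be positive integers and B, V > 0. For n = 1,…,N let Ē_n ≥ 0 and c_n ≥ 0 with Σ_{n=1}^N c_n² ≤ 2B. For each round t ∈ {0,…,T−1} and each n, let Ê_{n,t} and E*_{n,t} be reals (the energies consumed under the online algorithm and under the optimal offline policy, respectively) with |Ê_{n,t} − Ē_n| ≤ c_n and |E*_{n,t} − Ē_n| ≤ c_n. Define virtual queues by Q_{n,0} = 0 and Q_{n,t+1} = max(Q_{n,t} + Ê_{n,t} − Ē_n, 0). Let Û_t and U*_t be reals (the utilities achieved by the two policies) and assume the per-round optimality of the drift-plus-penalty minimization: for every t, Σ_{n=1}^N Q_{n,t}·Ê_{n,t} − V·Û_t ≤ Σ_{n=1}^N Q_{n,t}·E*_{n,t} − V·U*_t. Then Σ_{t=0}^{T−1} U*_t − Σ_{t=0}^{T−1} Û_t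 ≤ T²·B/V. -/
/-- Theorem 3(a) of the paper: the online Lyapunov drift-plus-penalty strategy is
`O(1/V)`-optimal in total utility relative to the optimal offline policy. -/
theorem stmt_14 (T N : ℕ) (hT : 0 < T) (hN : 0 < N) (B V : ℝ)
    (hB : 0 < B) (hV : 0 < V)
    (Ebar c : Fin N → ℝ) (hEbar : ∀ n, 0 ≤ Ebar n) (hc : ∀ n, 0 ≤ c n)
    (hc2 : ∑ n, c n ^ 2 ≤ 2 * B)
    (Ehat Estar : Fin N → ℕ → ℝ)
    (hEhat : ∀ n, ∀ t < T, |Ehat n t - Ebar n| ≤ c n)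
    (hEstar : ∀ n, ∀ t < T, |Estar n t - Ebar n| ≤ c n)
    (Q : Fin N → ℕ → ℝ)
    (hQ0 : ∀ n, Q n 0 = 0)
    (hQrec : ∀ n t, Q n (t + 1) = max (Q n t + Ehat n t - Ebar n) 0)
    (Uhat Ustar : ℕ → ℝ)
    (hopt : ∀ t < T,
      (∑ n, Q n t * Ehat n t) - V * Uhat t ≤ (∑ n, Q n t * Estar n t) - V * Ustar t) :
    (∑ t ∈ Finset.range T, Ustar t) - ∑ t ∈ Finset.range T, Uhat t ≤
      (T : ℝ) ^ 2 * B / V := by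
  -- queues are nonnegative
  have hQnn : ∀ n t, 0 ≤ Q n t := by
    intro n t
    cases t with
    | zero => rw [hQ0]
    | succ s => rw [hQrec]; exact le_max_right _ _
  -- queues grow at most by c n per step: Q n t ≤ t * c n for t ≤ T
  have hQle : ∀ t, t ≤ T → ∀ n, Q n t ≤ t * c n := by
    intro t
    induction t with
    | zero => intro _ n; simp [hQ0]
    | succ s ih =>
      intro hsT n
      have hs : s < T := Nat.lt_of_succ_le hsT
      have h1 := ih (le_of_lt hs) n
      have h2 := (abs_le.mp (hEhat n s hs)).2
      rw [hQrec]
      have : Q n s + Ehat n s - Ebar n ≤ (s + 1 : ℕ) * c n := by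
        push_cast; nlinarith
      exact max_le this (mul_nonneg (Nat.cast_nonneg _) (hc n))
  -- drift-plus-penalty per-round bound
  have key : ∀ t, t < T →
      (∑ n, Q n (t + 1) ^ 2) / 2 - (∑ n, Q n t ^ 2) / 2
        + V * (Ustar t - Uhat t) ≤ B + 2 * t * B := by
    intro t ht
    -- pointwise drift bound
    have hdrift : ∀ n : Fin N,
        Q n (t + 1) ^ 2 ≤ Q n t ^ 2 + 2 * Q n t * (Ehat n t - Ebar n) + c n ^ 2 := by
      intro n
      have h2 := abs_le.mp (hEhat n t ht)
      have hsq : Q n (t + 1) ^ 2 ≤ (Q n t + Ehat n t - Ebar n) ^ 2 := by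
        rw [hQrec]
        rcases le_or_gt (Q n t + Ehat n t - Ebar n) 0 with h | h
        · rw [max_eq_right h]
          simpa using sq_nonneg (Q n t + Ehat n t - Ebar n)
        · rw [max_eq_left h.le]
      nlinarith [h2.1, h2.2]
    have hsum : ∑ n, Q n (t + 1) ^ 2 ≤
        ∑ n, (Q n t ^ 2 + 2 * Q n t * (Ehat n t - Ebar n) + c n ^ 2) :=
      Finset.sum_le_sum fun n _ => hdrift n
    rw [Finset.sum_add_distrib, Finset.sum_add_distrib] at hsum
    -- use per-round optimality
    have hop := hopt t ht
    -- bound ∑ Q (E* - Ebar) ≤ ∑ Q * c ≤ 2 t B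
    have hbd : ∑ n, Q n t * (Estar n t - Ebar n) ≤ 2 * t * B := by
      have h1 : ∑ n, Q n t * (Estar n t - Ebar n) ≤ ∑ n, (t : ℝ) * c n * c n := by
        apply Finset.sum_le_sum
        intro n _
        have := (abs_le.mp (hEstar n t ht)).2
        have hq := hQle t (le_of_lt ht) n
        nlinarith [hQnn n t, hc n]
      calc ∑ n, Q n t * (Estar n t - Ebar n) ≤ ∑ n, (t : ℝ) * c n * c n := h1
        _ = (t : ℝ) * ∑ n, c n ^ 2 := by rw [Finset.mul_sum]; congr 1; ext n; ring
        _ ≤ (t : ℝ) * (2 * B) := by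
            apply mul_le_mul_of_nonneg_left hc2 (Nat.cast_nonneg t)
        _ = 2 * t * B := by ring
    have hsplit : ∀ (E : Fin N → ℕ → ℝ),
        ∑ n, Q n t * (E n t - Ebar n) = (∑ n, Q n t * E n t) - ∑ n, Q n t * Ebar n := by
      intro E
      rw [← Finset.sum_sub_distrib]; congr 1; ext n; ring
    have h3 : ∑ n, Q n t * (Ehat n t - Ebar n) + V * (Ustar t - Uhat t)
        ≤ 2 * t * B := by
      have := hsplit Ehat
      have := hsplit Estar
      nlinarith [hbd, hop]
    have h4 : ∑ n, 2 * Q n t * (Ehat n t - Ebar n)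
        = 2 * ∑ n, Q n t * (Ehat n t - Ebar n) := by
      rw [Finset.mul_sum]; congr 1; ext n; ring
    rw [h4] at hsum
    linarith [hsum, hc2, h3]
  -- sum the per-round bounds
  have hsumkey : ∑ t ∈ Finset.range T,
      ((∑ n, Q n (t + 1) ^ 2) / 2 - (∑ n, Q n t ^ 2) / 2 + V * (Ustar t - Uhat t))
      ≤ ∑ t ∈ Finset.range T, (B + 2 * t * B) :=
    Finset.sum_le_sum fun t ht => key t (Finset.mem_range.mp ht)
  have htele : ∑ t ∈ Finset.range T,
      ((∑ n, Q n (t + 1) ^ 2) / 2 - (∑ n, Q n t ^ 2) / 2)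
      = (∑ n, Q n T ^ 2) / 2 - (∑ n, Q n 0 ^ 2) / 2 :=
    Finset.sum_range_sub (fun t => (∑ n, Q n t ^ 2) / 2) T
  have hrhs : ∀ M : ℕ, ∑ t ∈ Finset.range M, (B + 2 * t * B) = (M : ℝ) ^ 2 * B := by
    intro M
    induction M with
    | zero => simp
    | succ s ih =>
      rw [Finset.sum_range_succ, ih]
      push_cast; ring
  rw [Finset.sum_add_distrib, htele, hrhs T] at hsumkey
  have hQT : 0 ≤ (∑ n, Q n T ^ 2) / 2 := by positivity
  have hQ0' : (∑ n, Q n 0 ^ 2) / 2 = 0 := by simp [hQ0]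
  have hdist : ∑ t ∈ Finset.range T, V * (Ustar t - Uhat t)
      = V * ((∑ t ∈ Finset.range T, Ustar t) - ∑ t ∈ Finset.range T, Uhat t) := by
    rw [← Finset.mul_sum, Finset.sum_sub_distrib]
  rw [hdist, hQ0'] at hsumkey
  rw [le_div_iff₀ hV]
  nlinarith [hsumkey, hQT]
end

section
/- Let T and N be positive integers, B, V > 0, and Ē_n ≥ 0 for n = 1,…,N. For each round t ∈ {0,…,T−1} and each n, let E_{n,t} be a real number. Define virtual queues by Q_{n,0} = 0 and Q_{n,t+1} = max(Q_{n,t} + E_{n,t} − Ē_n, 0), and let L(Q^t) = (1/2)·Σ_{n=1}^N Q_{n,t}². Let U*_t ≥ 0 for each t, and assume that for every t ∈ {0,…,T−1}: L(Q^{t+1}) − L(Q^t) ≤ B + V·U*_t. Then (1/T)·Σ_{t=0}^{T−1} Σ_{n=1}^N E_{n,t} ≤ Σ_{n=1}^N Ē_n + √(2NB/T + 2NV·(Σ_{t=0}^{T−1} U*_t)/T²). -/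
/-!
Each queue dominates its accumulated surplus, `∑_t (E_{n,t} − Ē_n) ≤ Q_{n,T}`, because the
recursion `Q_{t+1} = max(Q_t + a_t, 0)` only ever adds back what the `max` clips. Telescoping the
drift bound gives `(1/2) ∑_n Q_{n,T}² ≤ T B + V ∑_t U*_t`, and Cauchy–Schwarz turns this into
`∑_n Q_{n,T} ≤ √(N ∑_n Q_{n,T}²)`, which is `T` times the square root in the statement.
-/

open Finset

theorem sum_range_le_of_le_max_add {q a : ℕ → ℝ} (hq0 : q 0 = 0)
    (hrec : ∀ t, q (t + 1) = max (q t + a t) 0) (T : ℕ) :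
    ∑ t ∈ range T, a t ≤ q T := by
  induction T with
  | zero => simp [hq0]
  | succ T ih =>
    rw [sum_range_succ, hrec]
    linarith [le_max_left (q T + a T) 0]

theorem sub_le_sum_range_of_sub_le {f b : ℕ → ℝ} {T : ℕ}
    (h : ∀ t < T, f (t + 1) - f t ≤ b t) :
    f T - f 0 ≤ ∑ t ∈ range T, b t := by
  rw [← sum_range_sub]
  exact sum_le_sum fun t ht => h t (mem_range.mp ht)

theorem sum_le_sqrt_card_mul_sum_sq {ι : Type*} (s : Finset ι) (f : ι → ℝ) :
    ∑ i ∈ s, f i ≤ √(#s * ∑ i ∈ s, f i ^ 2) :=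
  Real.le_sqrt_of_sq_le (sq_sum_le_card_mul_sum_sq ..)

theorem stmt_15_general (T N : ℕ) (hT : 0 < T) (B V : ℝ)
    (Ebar : Fin N → ℝ)
    (E : Fin N → ℕ → ℝ)
    (Q : Fin N → ℕ → ℝ)
    (hQ0 : ∀ n, Q n 0 = 0)
    (hQrec : ∀ n t, Q n (t + 1) = max (Q n t + E n t - Ebar n) 0)
    (Ustar : ℕ → ℝ)
    (hdrift : ∀ t < T,
      (1 / 2 : ℝ) * (∑ n, Q n (t + 1) ^ 2) - (1 / 2 : ℝ) * (∑ n, Q n t ^ 2) ≤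
        B + V * Ustar t) :
    (1 / T : ℝ) * ∑ t ∈ Finset.range T, ∑ n, E n t ≤
      (∑ n, Ebar n) +
        Real.sqrt (2 * N * B / T +
          2 * N * V * (∑ t ∈ Finset.range T, Ustar t) / (T : ℝ) ^ 2) := by
  have hTpos : (0 : ℝ) < T := by exact_mod_cast hT
  have hsurplus : ∑ t ∈ range T, ∑ n, E n t - T * ∑ n, Ebar n ≤ ∑ n, Q n T := by
    calc ∑ t ∈ range T, ∑ n, E n t - T * ∑ n, Ebar n
        = ∑ n, ∑ t ∈ range T, (E n t - Ebar n) := by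
          rw [sum_comm]
          simp only [sum_sub_distrib, sum_const, card_range, nsmul_eq_mul, mul_sum]
      _ ≤ ∑ n, Q n T := sum_le_sum fun n _ =>
          sum_range_le_of_le_max_add (hQ0 n) (fun t => by rw [hQrec, add_sub_assoc]) T
  have hlyap : ∑ n, Q n T ^ 2 ≤ 2 * (T * B + V * ∑ t ∈ range T, Ustar t) := by
    have := sub_le_sum_range_of_sub_le (f := fun t => (1 / 2 : ℝ) * ∑ n, Q n t ^ 2) hdrift
    simp only [hQ0, sum_add_distrib, sum_const, card_range, nsmul_eq_mul, ← mul_sum] at this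
    norm_num at this
    linarith
  have hscale : N * (2 * (T * B + V * ∑ t ∈ range T, Ustar t)) =
      (T : ℝ) ^ 2 * (2 * N * B / T + 2 * N * V * (∑ t ∈ range T, Ustar t) / (T : ℝ) ^ 2) := by
    field_simp
  rw [one_div_mul_eq_div, div_le_iff₀ hTpos]
  calc ∑ t ∈ range T, ∑ n, E n t
      ≤ T * ∑ n, Ebar n + ∑ n, Q n T := by linarith
    _ ≤ T * ∑ n, Ebar n + √(N * ∑ n, Q n T ^ 2) := by
        simpa using sum_le_sqrt_card_mul_sum_sq univ fun n => Q n T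
    _ ≤ T * ∑ n, Ebar n + √(N * (2 * (T * B + V * ∑ t ∈ range T, Ustar t))) := by
        gcongr
    _ = _ := by
        rw [hscale, Real.sqrt_mul (sq_nonneg _), Real.sqrt_sq hTpos.le]
        ring

/-- Theorem 3(b) of the paper: under the per-round Lyapunov drift bound
`L(Q^{t+1}) − L(Q^t) ≤ B + V·U*_t`, the average per-round energy exceeds the total
per-round budget by at most an `O(√V)` term. -/
theorem stmt_15 (T N : ℕ) (hT : 0 < T) (hN : 0 < N) (B V : ℝ)
    (hB : 0 < B) (hV : 0 < V)
    (Ebar : Fin N → ℝ) (hEbar : ∀ n, 0 ≤ Ebar n)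
    (E : Fin N → ℕ → ℝ)
    (Q : Fin N → ℕ → ℝ)
    (hQ0 : ∀ n, Q n 0 = 0)
    (hQrec : ∀ n t, Q n (t + 1) = max (Q n t + E n t - Ebar n) 0)
    (Ustar : ℕ → ℝ) (hUstar : ∀ t, 0 ≤ Ustar t)
    (hdrift : ∀ t < T,
      (1 / 2 : ℝ) * (∑ n, Q n (t + 1) ^ 2) - (1 / 2 : ℝ) * (∑ n, Q n t ^ 2) ≤
        B + V * Ustar t) :
    (1 / T : ℝ) * ∑ t ∈ Finset.range T, ∑ n, E n t ≤
      (∑ n, Ebar n) +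
        Real.sqrt (2 * N * B / T +
          2 * N * V * (∑ t ∈ Finset.range T, Ustar t) / (T : ℝ) ^ 2) :=
  stmt_15_general T N hT B V Ebar E Q hQ0 hQrec Ustar hdrift
end
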